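/- For all positive integers a, b, c with a ≤ b ≤ c, 3a < b + c and 2b > c, it holds that f(a,b,c) = ⌊2(b+c−1)/3⌋. -/

import Mathlib

/-!
Lower bound: fixing the first coordinate, the other two coordinates of the questions must solve
two-dimensional Mastermind on the `b × c` board. This happens exactly when at most one row and at
most one column are empty, at most one point is alone in both its row and its column, and there is
no such point if some row and some column are empty. Counting the points row by row and column by
column then gives `2 (b + c) ≤ 3 |Q| + 4`.

Upper bound: `⌊2 (b + c - 1) / 3⌋` questions are placed as vertical and horizontal dominoes on
pairwise disjoint lines, plus possibly one singleton, which separates the board. The first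
coordinates run cyclically through the vertical and through the horizontal dominoes, so each value
labels cells of two dominoes of the same orientation; `3 a < b + c` leaves enough dominoes for this.
If no question separates two secrets that differ in every coordinate, the two cells labelled by the
first secret lie one in the row and one in the column of the second secret; the partner of the
appropriate one must then share a line with a cell labelled by the second secret without being on
its domino.
-/

/-- A question (and a secret) for `(a,b,c)`-Mastermind is a triple in
`Fin a × Fin b × Fin c`. -/
abbrev Question (a b c : ℕ) := Fin a × Fin b × Fin c

/-- `g s q` is the number of coordinates in which `s` and `q` agree. -/
def g {a b c : ℕ} (s q : Question a b c) : ℕ :=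
  (if s.1 = q.1 then 1 else 0) + (if s.2.1 = q.2.1 then 1 else 0) +
    (if s.2.2 = q.2.2 then 1 else 0)

/-- A finite set of questions is a feasible strategy if every pair of distinct
secrets is distinguished by some question. -/
def Feasible {a b c : ℕ} (Q : Finset (Question a b c)) : Prop :=
  ∀ s s' : Question a b c, s ≠ s' → ∃ q ∈ Q, g s q ≠ g s' q

/-- `f a b c` is the minimum cardinality of a feasible strategy for
`(a,b,c)`-Mastermind. -/
noncomputable def f (a b c : ℕ) : ℕ :=
  sInf {n : ℕ | ∃ Q : Finset (Question a b c), Feasible Q ∧ Q.card = n}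

open Finset

section Fibres

variable {ι κ : Type*} [DecidableEq ι] [DecidableEq κ]

def AloneIn (s : Finset ι) (f : ι → κ) (x : ι) : Prop := ∀ y ∈ s, f y = f x → y = x

instance (s : Finset ι) (f : ι → κ) : DecidablePred (AloneIn s f) := fun _ => by
  unfold AloneIn; infer_instance

theorem two_mul_card_image_le (s : Finset ι) (f : ι → κ) :
    2 * (s.image f).card ≤ s.card + (s.filter (AloneIn s f)).card := by
  set t := s.filter (AloneIn s f)
  have hs := card_eq_sum_card_fiberwise (f := f) (t := s.image f)
    fun x hx => mem_image_of_mem f hx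
  have ht := card_eq_sum_card_fiberwise (f := f) (s := t) (t := s.image f)
    fun x hx => mem_image_of_mem f (mem_filter.mp hx).1
  rw [hs, ht, ← sum_add_distrib, mul_comm, ← smul_eq_mul, ← sum_const]
  refine sum_le_sum fun k hk => ?_
  obtain ⟨x, hx, rfl⟩ := mem_image.mp hk
  have hxf : x ∈ s.filter (f · = f x) := mem_filter.mpr ⟨hx, rfl⟩
  by_cases h2 : 2 ≤ (s.filter (f · = f x)).card
  · omega
  have hlonely : x ∈ t.filter (f · = f x) := by
    refine mem_filter.mpr ⟨mem_filter.mpr ⟨hx, fun y hy hyx => ?_⟩, rfl⟩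
    exact card_le_one.mp (by omega) y (mem_filter.mpr ⟨hy, hyx⟩) x hxf
  have := card_pos.mpr ⟨x, hxf⟩
  have := card_pos.mpr ⟨x, hlonely⟩
  omega

end Fibres

section TwoDim

variable {α β : Type*} [DecidableEq α] [DecidableEq β]

def g₂ (x p : α × β) : ℕ := (if x.1 = p.1 then 1 else 0) + (if x.2 = p.2 then 1 else 0)

/-- The two-dimensional analogue of `Feasible`. -/
def Separates (P : Finset (α × β)) : Prop :=
  ∀ x y : α × β, x ≠ y → ∃ p ∈ P, g₂ x p ≠ g₂ y p

def IsLonely (P : Finset (α × β)) (x : α × β) : Prop :=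
  AloneIn P Prod.fst x ∧ AloneIn P Prod.snd x

instance (P : Finset (α × β)) : DecidablePred (IsLonely P) := fun _ => by
  unfold IsLonely; infer_instance

variable {P : Finset (α × β)}

theorem Separates.eq_of_notMem_image_fst [Nonempty β] (hP : Separates P) {r r' : α}
    (hr : r ∉ P.image Prod.fst) (hr' : r' ∉ P.image Prod.fst) : r = r' := by
  by_contra hne
  obtain ⟨p, hp, hne'⟩ := hP (r, Classical.arbitrary β) (r', Classical.arbitrary β)
    (by simp [hne])
  have := (mem_image_of_mem Prod.fst hp).ne_of_notMem hr
  have := (mem_image_of_mem Prod.fst hp).ne_of_notMem hr'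
  simp_all [g₂, eq_comm]

theorem Separates.eq_of_notMem_image_snd [Nonempty α] (hP : Separates P) {w w' : β}
    (hw : w ∉ P.image Prod.snd) (hw' : w' ∉ P.image Prod.snd) : w = w' := by
  by_contra hne
  obtain ⟨p, hp, hne'⟩ := hP (Classical.arbitrary α, w) (Classical.arbitrary α, w')
    (by simp [hne])
  have := (mem_image_of_mem Prod.snd hp).ne_of_notMem hw
  have := (mem_image_of_mem Prod.snd hp).ne_of_notMem hw'
  simp_all [g₂, eq_comm]

/-- Two lonely points `x ≠ y` cannot separate `(y.1, x.2)` from `(x.1, y.2)`. -/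
theorem Separates.eq_of_isLonely (hP : Separates P) {x y : α × β} (hx : x ∈ P) (hy : y ∈ P)
    (hlx : IsLonely P x) (hly : IsLonely P y) : x = y := by
  by_contra hne
  have h1 : x.1 ≠ y.1 := fun h => hne (hly.1 x hx h)
  have h2 : x.2 ≠ y.2 := fun h => hne (hly.2 x hx h)
  obtain ⟨p, hp, hne'⟩ := hP (y.1, x.2) (x.1, y.2) (by simp [Ne.symm h1])
  by_cases hpx : p = x
  · subst hpx; simp [g₂, Ne.symm h1, Ne.symm h2] at hne'
  by_cases hpy : p = y
  · subst hpy; simp [g₂, h1, h2] at hne'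
  have := mt (hlx.1 p hp) hpx; have := mt (hlx.2 p hp) hpx
  have := mt (hly.1 p hp) hpy; have := mt (hly.2 p hp) hpy
  simp only [g₂] at hne'
  split_ifs at hne' <;> simp_all

/-- With an empty row `r` and an empty column `w`, a lonely point `x` cannot separate `(r, x.2)`
from `(x.1, w)`. -/
theorem Separates.not_isLonely (hP : Separates P) {r : α} {w : β} (hr : r ∉ P.image Prod.fst)
    (hw : w ∉ P.image Prod.snd) {x : α × β} (hx : x ∈ P) : ¬IsLonely P x := by
  intro hlx
  have hxr := (mem_image_of_mem Prod.fst hx).ne_of_notMem hr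
  have hxw := (mem_image_of_mem Prod.snd hx).ne_of_notMem hw
  obtain ⟨p, hp, hne'⟩ := hP (r, x.2) (x.1, w) (by simp [hxr.symm])
  have := (mem_image_of_mem Prod.fst hp).ne_of_notMem hr
  have := (mem_image_of_mem Prod.snd hp).ne_of_notMem hw
  by_cases hpx : p = x
  · subst hpx; simp [g₂, hxr.symm, hxw.symm] at hne'
  have := mt (hlx.1 p hp) hpx; have := mt (hlx.2 p hp) hpx
  simp only [g₂] at hne'
  split_ifs at hne' <;> simp_all [eq_comm]

theorem eq_of_g₂_eq {x y p : α × β} (hxy1 : x.1 ≠ y.1) (hxy2 : x.2 ≠ y.2)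
    (h : g₂ x p = g₂ y p) (hp : p.1 = x.1 ∨ p.2 = y.2) : p = (x.1, y.2) := by
  unfold g₂ at h
  rcases hp with hp | hp <;> ext <;> simp only [hp] at h ⊢ <;> split_ifs at h <;> simp_all

theorem g₂_ne_of_snd_eq {x y p : α × β} (h1 : x.1 = y.1) (h2 : x.2 ≠ y.2) (hp : p.2 = x.2) :
    g₂ x p ≠ g₂ y p := by
  simp only [g₂, h1, hp, if_true, if_neg (Ne.symm h2)]; omega

theorem g₂_ne_of_fst_eq {x y p : α × β} (h2 : x.2 = y.2) (h1 : x.1 ≠ y.1) (hp : p.1 = x.1) :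
    g₂ x p ≠ g₂ y p := by
  simp only [g₂, h2, hp, if_true, if_neg (Ne.symm h1)]; omega

theorem isLonely_or_notMem_of_forall {z : α × β}
    (hz : ∀ p ∈ P, (p.1 = z.1 ∨ p.2 = z.2) → p = z) :
    (z ∈ P ∧ IsLonely P z) ∨ (z.1 ∉ P.image Prod.fst ∧ z.2 ∉ P.image Prod.snd) := by
  by_cases hzP : z ∈ P
  · exact Or.inl ⟨hzP, fun p hp h => hz p hp (Or.inl h), fun p hp h => hz p hp (Or.inr h)⟩
  · refine Or.inr ⟨fun h => ?_, fun h => ?_⟩ <;> obtain ⟨p, hp, hpz⟩ := mem_image.mp h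
    · exact hzP (hz p hp (Or.inl hpz) ▸ hp)
    · exact hzP (hz p hp (Or.inr hpz) ▸ hp)

theorem separates_of_forall
    (hR : ∀ r r', r ∉ P.image Prod.fst → r' ∉ P.image Prod.fst → r = r')
    (hC : ∀ w w', w ∉ P.image Prod.snd → w' ∉ P.image Prod.snd → w = w')
    (hL : ∀ x ∈ P, ∀ y ∈ P, IsLonely P x → IsLonely P y → x = y)
    (hE : ∀ r w, r ∉ P.image Prod.fst → w ∉ P.image Prod.snd → ∀ x ∈ P, ¬IsLonely P x) :
    Separates P := by
  intro x y hxy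
  by_contra! h
  by_cases h1 : x.1 = y.1
  · have h2 : x.2 ≠ y.2 := fun h2 => hxy (Prod.ext h1 h2)
    refine h2 (hC _ _ (fun hx => ?_) (fun hy => ?_))
    · obtain ⟨p, hp, hpx⟩ := mem_image.mp hx
      exact g₂_ne_of_snd_eq h1 h2 hpx (h p hp)
    · obtain ⟨p, hp, hpy⟩ := mem_image.mp hy
      exact g₂_ne_of_snd_eq h1.symm (Ne.symm h2) hpy (h p hp).symm
  by_cases h2 : x.2 = y.2
  · refine h1 (hR _ _ (fun hx => ?_) (fun hy => ?_))
    · obtain ⟨p, hp, hpx⟩ := mem_image.mp hx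
      exact g₂_ne_of_fst_eq h2 h1 hpx (h p hp)
    · obtain ⟨p, hp, hpy⟩ := mem_image.mp hy
      exact g₂_ne_of_fst_eq h2.symm (Ne.symm h1) hpy (h p hp).symm
  have hX := isLonely_or_notMem_of_forall (z := (x.1, y.2)) fun p hp =>
    eq_of_g₂_eq (x := x) (y := y) h1 h2 (h p hp)
  have hY := isLonely_or_notMem_of_forall (z := (y.1, x.2)) fun p hp =>
    eq_of_g₂_eq (x := y) (y := x) (Ne.symm h1) (Ne.symm h2) (h p hp).symm
  rcases hX with ⟨hX, hlX⟩ | ⟨hx1, hy2⟩ <;> rcases hY with ⟨hY, hlY⟩ | ⟨hy1, hx2⟩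
  · exact h1 (Prod.ext_iff.mp (hL _ hX _ hY hlX hlY)).1
  · exact hE _ _ hy1 hx2 _ hX hlX
  · exact hE _ _ hx1 hy2 _ hY hlY
  · exact h1 (hR _ _ hx1 hy1)

theorem Separates.two_mul_card_add_card_le [Fintype α] [Fintype β] [Nonempty α] [Nonempty β]
    (hP : Separates P) : 2 * (Fintype.card α + Fintype.card β) ≤ 3 * P.card + 4 := by
  have hRc : Fintype.card α ≤ (P.image Prod.fst).card + 1 := by
    have : (P.image Prod.fst)ᶜ.card ≤ 1 := card_le_one.mpr fun r hr r' hr' =>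
      hP.eq_of_notMem_image_fst (mem_compl.mp hr) (mem_compl.mp hr')
    rw [card_compl] at this; omega
  have hCc : Fintype.card β ≤ (P.image Prod.snd).card + 1 := by
    have : (P.image Prod.snd)ᶜ.card ≤ 1 := card_le_one.mpr fun w hw w' hw' =>
      hP.eq_of_notMem_image_snd (mem_compl.mp hw) (mem_compl.mp hw')
    rw [card_compl] at this; omega
  have hL1 : (P.filter (IsLonely P)).card ≤ 1 := card_le_one.mpr fun x hx y hy =>
    hP.eq_of_isLonely (mem_filter.mp hx).1 (mem_filter.mp hy).1 (mem_filter.mp hx).2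
      (mem_filter.mp hy).2
  have hL0 : (P.image Prod.fst).card < Fintype.card α →
      (P.image Prod.snd).card < Fintype.card β → (P.filter (IsLonely P)).card = 0 := by
    intro hr hw
    obtain ⟨r, -, hr⟩ := exists_mem_notMem_of_card_lt_card (s := P.image Prod.fst) (t := univ)
      (by rwa [card_univ])
    obtain ⟨w, -, hw⟩ := exists_mem_notMem_of_card_lt_card (s := P.image Prod.snd) (t := univ)
      (by rwa [card_univ])
    exact card_eq_zero.mpr (filter_eq_empty_iff.mpr fun x hx => hP.not_isLonely hr hw hx)
  have hincl : (P.filter (AloneIn P Prod.fst)).card + (P.filter (AloneIn P Prod.snd)).card ≤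
      P.card + (P.filter (IsLonely P)).card := by
    rw [show P.filter (IsLonely P) = P.filter fun x => AloneIn P Prod.fst x ∧ AloneIn P Prod.snd x
      from rfl, filter_and, ← card_union_add_card_inter]
    exact Nat.add_le_add_right
      (card_le_card (union_subset (filter_subset _ _) (filter_subset _ _))) _
  have := two_mul_card_image_le P Prod.fst
  have := two_mul_card_image_le P Prod.snd
  omega

end TwoDim

section Mastermind

variable {a b c : ℕ}

theorem g_eq_ite_add_g₂ (s q : Question a b c) :
    g s q = (if s.1 = q.1 then 1 else 0) + g₂ s.2 q.2 := by
  simp only [g, g₂, add_assoc]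

theorem Feasible.separates {Q : Finset (Question a b c)} (hQ : Feasible Q) (ha : 0 < a) :
    Separates (Q.image Prod.snd) := by
  intro x y hxy
  obtain ⟨q, hq, hne⟩ := hQ (⟨0, ha⟩, x) (⟨0, ha⟩, y) (by simpa using hxy)
  exact ⟨q.2, mem_image_of_mem _ hq, fun h => hne (by rw [g_eq_ite_add_g₂, g_eq_ite_add_g₂, h])⟩

theorem le_card_of_feasible {Q : Finset (Question a b c)} (hQ : Feasible Q) (ha : 0 < a)
    (hb : 0 < b) (hc : 0 < c) : 2 * (b + c - 1) / 3 ≤ Q.card := by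
  have : NeZero b := ⟨hb.ne'⟩
  have : NeZero c := ⟨hc.ne'⟩
  have h := (hQ.separates ha).two_mul_card_add_card_le
  rw [Fintype.card_fin, Fintype.card_fin] at h
  have := card_image_le (s := Q) (f := Prod.snd)
  omega

def RowConfined (Q : Finset (Question a b c)) (u : Fin a) : Prop :=
  ∃ r, ∀ q ∈ Q, q.1 = u → q.2.1 = r

def ColConfined (Q : Finset (Question a b c)) (u : Fin a) : Prop :=
  ∃ w, ∀ q ∈ Q, q.1 = u → q.2.2 = w

theorem row_eq_of_g_eq {s s' q : Question a b c} (h : g s q = g s' q) (hq : q.1 = s.1)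
    (hu : s.1 ≠ s'.1) (hw : s.2.2 = s'.2.2) : q.2.1 = s'.2.1 := by
  rw [g, g, hw, hq, if_pos rfl, if_neg (Ne.symm hu)] at h
  by_contra hne
  rw [if_neg (Ne.symm hne)] at h
  split_ifs at h <;> omega

theorem col_eq_of_g_eq {s s' q : Question a b c} (h : g s q = g s' q) (hq : q.1 = s.1)
    (hu : s.1 ≠ s'.1) (hv : s.2.1 = s'.2.1) : q.2.2 = s'.2.2 := by
  rw [g, g, hv, hq, if_pos rfl, if_neg (Ne.symm hu)] at h
  by_contra hne
  rw [if_neg (Ne.symm hne)] at h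
  split_ifs at h <;> omega

theorem feasible_of_separates {Q : Finset (Question a b c)} (hsep : Separates (Q.image Prod.snd))
    (hlabel : ∀ u, ∃ q ∈ Q, q.1 = u)
    (hrow : ∀ u u', RowConfined Q u → RowConfined Q u' → u = u')
    (hcol : ∀ u u', ColConfined Q u → ColConfined Q u' → u = u')
    (hgen : ∀ s s' : Question a b c, s.1 ≠ s'.1 → s.2.1 ≠ s'.2.1 → s.2.2 ≠ s'.2.2 →
      ∃ q ∈ Q, g s q ≠ g s' q) :
    Feasible Q := by
  intro s s' hss'
  by_contra! h
  by_cases hu : s.1 = s'.1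
  · obtain ⟨p, hp, hne⟩ := hsep s.2 s'.2 fun h2 => hss' (Prod.ext hu h2)
    obtain ⟨q, hq, rfl⟩ := mem_image.mp hp
    have := h q hq
    rw [g_eq_ite_add_g₂, g_eq_ite_add_g₂, hu] at this
    omega
  by_cases hv : s.2.1 = s'.2.1 <;> by_cases hw : s.2.2 = s'.2.2
  · obtain ⟨q, hq, hqu⟩ := hlabel s.1
    have := h q hq
    rw [g, g, hv, hw, hqu, if_pos rfl, if_neg (Ne.symm hu)] at this
    omega
  · exact hu (hcol _ _ ⟨_, fun q hq hqu => col_eq_of_g_eq (h q hq) hqu hu hv⟩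
      ⟨_, fun q hq hqu => col_eq_of_g_eq (h q hq).symm hqu (Ne.symm hu) hv.symm⟩)
  · exact hu (hrow _ _ ⟨_, fun q hq hqu => row_eq_of_g_eq (h q hq) hqu hu hw⟩
      ⟨_, fun q hq hqu => row_eq_of_g_eq (h q hq).symm hqu (Ne.symm hu) hw.symm⟩)
  · obtain ⟨q, hq, hne⟩ := hgen s s' hu hv hw
    exact hne (h q hq)

theorem f_eq_of_feasible {n : ℕ} {Q : Finset (Question a b c)} (hQ : Feasible Q)
    (hcard : Q.card = n) (hmin : ∀ Q' : Finset (Question a b c), Feasible Q' → n ≤ Q'.card) :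
    f a b c = n :=
  le_antisymm (Nat.sInf_le ⟨Q, hQ, hcard⟩)
    (le_csInf ⟨n, Q, hQ, hcard⟩ fun _ ⟨Q', hQ', hQ'card⟩ => hQ'card ▸ hmin Q' hQ')

end Mastermind

/-- Cells `2 * i` and `2 * i + 1` form piece `i`: pieces `i < v` are vertical dominoes (rows
`2 * i`, `2 * i + 1`, column `i`), pieces `v ≤ i < v + h` horizontal ones (row `v + i`, columns
`2 * i - v`, `2 * i - v + 1`), and cell `2 * (v + h)` is a singleton when `e = 1`. -/
structure Layout where
  v : ℕ
  h : ℕ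
  e : ℕ
  e_le_one : e ≤ 1

namespace Layout

variable (L : Layout)

def size : ℕ := 2 * (L.v + L.h) + L.e

def row (p : ℕ) : ℕ := if p < 2 * L.v then p else L.v + p / 2

def col (p : ℕ) : ℕ := if p < 2 * L.v then p / 2 else p - L.v

/-- Cyclic successor of a piece within its block (vertical or horizontal). -/
def succ (i : ℕ) : ℕ :=
  if i < L.v then (if i + 1 < L.v then i + 1 else 0) else (if i + 1 < L.v + L.h then i + 1 else L.v)

def pred (i : ℕ) : ℕ :=
  if i < L.v then (if i = 0 then L.v - 1 else i - 1) else (if i = L.v then L.v + L.h - 1 else i - 1)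

def clamp (a i : ℕ) : ℕ := if i < a then i else 0

/-- The first coordinate of the question at cell `p`. The singleton's value `a - 1` matters only
for `v = h = e = 1` and `a = 2`, where `0` would fail. -/
def label (a p : ℕ) : ℕ :=
  if p = 2 * (L.v + L.h) then a - 1
  else if p % 2 = 0 then clamp a (p / 2) else clamp a (L.pred (p / 2))

variable {L} {a b c : ℕ}

theorem le_of_lt_size {p : ℕ} (hp : p < L.size) : p ≤ 2 * (L.v + L.h) := by
  have := L.e_le_one; unfold size at hp; omega

theorem row_eq_row_iff {p q : ℕ} (hp : p < L.size) (hq : q < L.size) :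
    L.row p = L.row q ↔ p = q ∨ (p / 2 = q / 2 ∧ L.v ≤ p / 2 ∧ p / 2 < L.v + L.h) := by
  have := le_of_lt_size hp; have := le_of_lt_size hq
  unfold row; split_ifs <;> omega

theorem col_eq_col_iff {p q : ℕ} :
    L.col p = L.col q ↔ p = q ∨ (p / 2 = q / 2 ∧ p / 2 < L.v) := by
  unfold col; split_ifs <;> omega

theorem row_lt {p : ℕ} (hp : p < L.size) : L.row p < 2 * L.v + L.h + L.e := by
  have := L.e_le_one; unfold row size at *; split_ifs <;> omega

theorem col_lt {p : ℕ} (hp : p < L.size) : L.col p < L.v + 2 * L.h + L.e := by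
  have := L.e_le_one; unfold col size at *; split_ifs <;> omega

theorem exists_row_eq {r : ℕ} (hr : r < 2 * L.v + L.h + L.e) : ∃ p < L.size, L.row p = r := by
  have := L.e_le_one
  unfold row size
  by_cases h : r < 2 * L.v
  · exact ⟨r, by omega, by simp [h]⟩
  · exact ⟨2 * (r - L.v), by omega, by rw [if_neg (by omega)]; omega⟩

theorem exists_col_eq {w : ℕ} (hw : w < L.v + 2 * L.h + L.e) : ∃ p < L.size, L.col p = w := by
  unfold col size
  by_cases h : w < L.v
  · exact ⟨2 * w, by omega, by rw [if_pos (by omega)]; omega⟩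
  · exact ⟨w + L.v, by omega, by rw [if_neg (by omega)]; omega⟩

theorem succ_lt {i : ℕ} (hi : i < L.v + L.h) : L.succ i < L.v + L.h := by
  unfold succ; split_ifs <;> omega

theorem pred_lt {i : ℕ} (hi : i < L.v + L.h) : L.pred i < L.v + L.h := by
  unfold pred; split_ifs <;> omega

theorem succ_lt_v_iff {i : ℕ} (hi : i < L.v + L.h) : L.succ i < L.v ↔ i < L.v := by
  unfold succ; split_ifs <;> omega

theorem pred_succ {i : ℕ} (hi : i < L.v + L.h) : L.pred (L.succ i) = i := by
  unfold pred succ; grind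

theorem succ_eq_self_iff {i : ℕ} (hi : i < L.v + L.h) :
    L.succ i = i ↔ (L.v = 1 ∧ i = 0) ∨ (L.h = 1 ∧ i = L.v) := by
  unfold succ; split_ifs <;> omega

theorem pred_eq_self_iff {i : ℕ} (hi : i < L.v + L.h) : L.pred i = i ↔ L.succ i = i := by
  unfold pred succ; split_ifs <;> omega

theorem label_two_mul {i : ℕ} (hi : i < L.v + L.h) : L.label a (2 * i) = clamp a i := by
  rw [label, if_neg (by omega), if_pos (by omega), Nat.mul_div_cancel_left _ two_pos]

theorem label_two_mul_add_one {i : ℕ} :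
    L.label a (2 * i + 1) = clamp a (L.pred i) := by
  rw [label, if_neg (by omega), if_neg (by omega)]; congr; omega

theorem label_singleton : L.label a (2 * (L.v + L.h)) = a - 1 := if_pos rfl

theorem label_two_mul_self {u : ℕ} (hu : u < a) (hun : u < L.v + L.h) :
    L.label a (2 * u) = u := by
  rw [label_two_mul hun, clamp, if_pos hu]

theorem label_two_mul_succ_add_one {u : ℕ} (hu : u < a) (hun : u < L.v + L.h) :
    L.label a (2 * L.succ u + 1) = u := by
  rw [label_two_mul_add_one, pred_succ hun, clamp, if_pos hu]

theorem eq_of_row_confined {u r : ℕ} (hu : u < a) (hun : u < L.v + L.h)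
    (hconf : ∀ p < L.size, L.label a p = u → L.row p = r) : L.h = 1 ∧ u = L.v := by
  have hs := succ_lt hun
  have h1 : 2 * u < L.size := by unfold size; omega
  have h2 : 2 * L.succ u + 1 < L.size := by unfold size; omega
  have hx := hconf _ h1 (label_two_mul_self hu hun)
  have hy := hconf _ h2 (label_two_mul_succ_add_one hu hun)
  have := (row_eq_row_iff h1 h2).mp (hx.trans hy.symm)
  have := (succ_eq_self_iff hun).mp (by omega)
  omega

theorem eq_of_col_confined {u w : ℕ} (hu : u < a) (hun : u < L.v + L.h)
    (hconf : ∀ p < L.size, L.label a p = u → L.col p = w) : L.v = 1 ∧ u = 0 := by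
  have hs := succ_lt hun
  have hx := hconf _ (by unfold size; omega) (label_two_mul_self hu hun)
  have hy := hconf _ (by unfold size; omega) (label_two_mul_succ_add_one hu hun)
  have := col_eq_col_iff.mp (hx.trans hy.symm)
  have := (succ_eq_self_iff hun).mp (by omega)
  omega

variable (L) in
/-- The layout uses `2 * v + h + e` rows and `v + 2 * h + e` columns. -/
structure Fits (a b c : ℕ) : Prop where
  a_pos : 0 < a
  a_le : a ≤ L.v + L.h
  rows_le : 2 * L.v + L.h + L.e ≤ b
  le_rows : b ≤ 2 * L.v + L.h + 1
  cols_eq : L.v + 2 * L.h + L.e + 1 = c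

theorem row_ne_and_col_ne {p q : ℕ} (hp : p < L.size) (hq : q < L.size)
    (hpq : p / 2 ≠ q / 2) : L.row p ≠ L.row q ∧ L.col p ≠ L.col q := by
  rw [Ne, Ne, row_eq_row_iff hp hq, col_eq_col_iff]; omega

theorem eq_of_row_eq_of_col_eq {p q : ℕ} (hp : p < L.size) (hq : q < L.size)
    (hr : L.row p = L.row q) (hc : L.col p = L.col q) : p = q := by
  have := (row_eq_row_iff hp hq).mp hr
  have := col_eq_col_iff.mp hc
  omega

variable (L) in
def agree (a : ℕ) (s : ℕ × ℕ × ℕ) (p : ℕ) : ℕ :=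
  (if s.1 = L.label a p then 1 else 0) + (if s.2.1 = L.row p then 1 else 0) +
    (if s.2.2 = L.col p then 1 else 0)

variable (L) in
def Confuses (a : ℕ) (s t : ℕ × ℕ × ℕ) : Prop :=
  s.1 ≠ t.1 ∧ s.2.1 ≠ t.2.1 ∧ s.2.2 ≠ t.2.2 ∧ ∀ p < L.size, L.agree a s p = L.agree a t p

namespace Confuses

variable {s t : ℕ × ℕ × ℕ} {p : ℕ}

theorem symm (h : L.Confuses a s t) : L.Confuses a t s :=
  ⟨h.1.symm, h.2.1.symm, h.2.2.1.symm, fun p hp => (h.2.2.2 p hp).symm⟩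

theorem row_or_col (h : L.Confuses a s t) (hp : p < L.size) (hl : L.label a p = s.1) :
    (L.row p = t.2.1 ∧ L.col p ≠ s.2.2 ∧ L.col p ≠ t.2.2) ∨
      (L.col p = t.2.2 ∧ L.row p ≠ s.2.1 ∧ L.row p ≠ t.2.1) := by
  obtain ⟨hu, hv, hw, hagree⟩ := h
  have := hagree p hp
  simp only [agree, hl, if_true, if_neg hu.symm] at this
  split_ifs at this <;> omega

theorem of_label_ne (h : L.Confuses a s t) (hp : p < L.size) (hs : L.label a p ≠ s.1)
    (ht : L.label a p ≠ t.1) :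
    (L.row p ≠ s.2.1 ∧ L.row p ≠ t.2.1 ∧ L.col p ≠ s.2.2 ∧ L.col p ≠ t.2.2) ∨
      (L.row p = s.2.1 ∧ L.col p = t.2.2) ∨ (L.row p = t.2.1 ∧ L.col p = s.2.2) := by
  obtain ⟨hu, hv, hw, hagree⟩ := h
  have := hagree p hp
  simp only [agree, if_neg (Ne.symm hs), if_neg (Ne.symm ht)] at this
  split_ifs at this <;> omega

theorem col_eq_of_row_eq (h : L.Confuses a s t) (hp : p < L.size) (hr : L.row p = t.2.1)
    (hl : L.label a p ≠ s.1) : L.col p = s.2.2 := by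
  by_cases ht : L.label a p = t.1
  · rcases h.symm.row_or_col hp ht with ⟨h1, -⟩ | ⟨h1, h2, -⟩
    · exact absurd (hr.symm.trans h1) h.2.1.symm
    · exact absurd hr h2
  · rcases h.of_label_ne hp hl ht with ⟨-, h1, -⟩ | ⟨h1, -⟩ | ⟨-, h1⟩
    · exact absurd hr h1
    · exact absurd (h1.symm.trans hr) h.2.1
    · exact h1

theorem row_eq_of_col_eq (h : L.Confuses a s t) (hp : p < L.size) (hc : L.col p = t.2.2)
    (hl : L.label a p ≠ s.1) : L.row p = s.2.1 := by
  by_cases ht : L.label a p = t.1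
  · rcases h.symm.row_or_col hp ht with ⟨-, h1, -⟩ | ⟨h1, -⟩
    · exact absurd hc h1
    · exact absurd (hc.symm.trans h1) h.2.2.1.symm
  · rcases h.of_label_ne hp hl ht with ⟨-, -, -, h1⟩ | ⟨h1, -⟩ | ⟨-, h1⟩
    · exact absurd hc h1
    · exact h1
    · exact absurd (h1.symm.trans hc) h.2.2.1

/-- Cells of distinct pieces share no line, so at most one of them lies on the row `t.2.1` and
at most one on the column `t.2.2`. -/
theorem false_of_three (h : L.Confuses a s t) {p q r : ℕ} (hp : p < L.size) (hq : q < L.size)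
    (hr : r < L.size) (hpq : p / 2 ≠ q / 2) (hpr : p / 2 ≠ r / 2) (hqr : q / 2 ≠ r / 2)
    (hlp : L.label a p = s.1) (hlq : L.label a q = s.1) (hlr : L.label a r = s.1) : False := by
  have := row_ne_and_col_ne hp hq hpq
  have := row_ne_and_col_ne hp hr hpr
  have := row_ne_and_col_ne hq hr hqr
  rcases h.row_or_col (by omega) hlp with hp' | hp' <;>
    rcases h.row_or_col (by omega) hlq with hq' | hq' <;>
    rcases h.row_or_col (by omega) hlr with hr' | hr' <;> omega

theorem false_of_vertical (h : L.Confuses a s t) {q : ℕ} (hq : q < L.size)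
    (hqv : q / 2 < L.v) (hrow : L.row q = s.2.1) (hcol : L.col q = t.2.2)
    (hC : ∃ p < L.size, L.label a p = t.1 ∧ L.col p ≠ s.2.2) : False := by
  obtain ⟨p, hp, hlp, hcp⟩ := hC
  rcases h.symm.row_or_col hp hlp with ⟨hrp, hcp', -⟩ | ⟨hcp', -⟩
  · rcases (row_eq_row_iff hp hq).mp (hrp.trans hrow.symm) with rfl | ⟨hpq, hv, -⟩
    · exact hcp' hcol
    · omega
  · exact hcp hcp'

theorem false_of_horizontal (h : L.Confuses a s t) {q : ℕ}
    (hqh : L.v ≤ q / 2) (hrow : L.row q = t.2.1) (hcol : L.col q = s.2.2)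
    (hD : ∃ p < L.size, L.label a p = t.1 ∧ L.row p ≠ s.2.1) : False := by
  obtain ⟨p, hp, hlp, hrp⟩ := hD
  rcases h.symm.row_or_col hp hlp with ⟨hrp', -⟩ | ⟨hcp, hrp', -⟩
  · exact hrp hrp'
  · rcases col_eq_col_iff.mp (hcp.trans hcol.symm) with rfl | ⟨hpq, hv⟩
    · exact hrp' hrow
    · omega

theorem row_and_col_of_succ_ne (h : L.Confuses a s t) (hs : s.1 < a) (hsn : s.1 < L.v + L.h)
    (hsucc : L.succ s.1 ≠ s.1) :
    (L.row (2 * s.1) = t.2.1 ∧ L.col (2 * L.succ s.1 + 1) = t.2.2) ∨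
      (L.col (2 * s.1) = t.2.2 ∧ L.row (2 * L.succ s.1 + 1) = t.2.1) := by
  have := succ_lt hsn
  have hx : 2 * s.1 < L.size := by unfold size; omega
  have hy : 2 * L.succ s.1 + 1 < L.size := by unfold size; omega
  have := row_ne_and_col_ne hx hy (by omega)
  rcases h.row_or_col hx (label_two_mul_self hs hsn) with hx' | hx' <;>
    rcases h.row_or_col hy (label_two_mul_succ_add_one hs hsn) with hy' | hy' <;> omega

theorem false_of_lt_v (h : L.Confuses a s t) (hs : s.1 < a) (ht : t.1 < a)
    (ha : a ≤ L.v + L.h) (hsv : s.1 < L.v) (hsucc : L.succ s.1 ≠ s.1)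
    (hx : L.label a (2 * s.1 + 1) ≠ s.1) (hy : L.label a (2 * L.succ s.1) ≠ s.1) : False := by
  have hC : ∃ p < L.size, L.label a p = t.1 ∧ L.col p ≠ s.2.2 := by
    by_contra! hC
    have := eq_of_col_confined ht (by omega) hC
    exact h.1 (by omega)
  have hsn : s.1 < L.v + L.h := by omega
  have := succ_lt hsn
  have := (succ_lt_v_iff hsn).mpr hsv
  rcases h.row_and_col_of_succ_ne hs hsn hsucc with ⟨-, hcol⟩ | ⟨hcol, -⟩
  · have hq : 2 * L.succ s.1 < L.size := by unfold size; omega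
    have hcol' : L.col (2 * L.succ s.1) = t.2.2 := hcol ▸ col_eq_col_iff.mpr (Or.inr (by omega))
    exact h.false_of_vertical hq (by omega) (h.row_eq_of_col_eq hq hcol' hy) hcol' hC
  · have hq : 2 * s.1 + 1 < L.size := by unfold size; omega
    have hcol' : L.col (2 * s.1 + 1) = t.2.2 := hcol ▸ col_eq_col_iff.mpr (Or.inr (by omega))
    exact h.false_of_vertical hq (by omega) (h.row_eq_of_col_eq hq hcol' hx) hcol' hC

theorem false_of_v_le (h : L.Confuses a s t) (hs : s.1 < a) (ht : t.1 < a)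
    (ha : a ≤ L.v + L.h) (hsv : L.v ≤ s.1) (hsucc : L.succ s.1 ≠ s.1)
    (hx : L.label a (2 * s.1 + 1) ≠ s.1) (hy : L.label a (2 * L.succ s.1) ≠ s.1) : False := by
  have hD : ∃ p < L.size, L.label a p = t.1 ∧ L.row p ≠ s.2.1 := by
    by_contra! hD
    have := eq_of_row_confined ht (by omega) hD
    exact h.1 (by omega)
  have hsn : s.1 < L.v + L.h := by omega
  have := succ_lt hsn
  have := (succ_lt_v_iff hsn).not.mpr (by omega)
  have hx' : 2 * s.1 < L.size := by unfold size; omega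
  have hy' : 2 * L.succ s.1 + 1 < L.size := by unfold size; omega
  rcases h.row_and_col_of_succ_ne hs hsn hsucc with ⟨hrow, -⟩ | ⟨-, hrow⟩
  · have hq : 2 * s.1 + 1 < L.size := by unfold size; omega
    have hrow' : L.row (2 * s.1 + 1) = t.2.1 :=
      hrow ▸ (row_eq_row_iff hq hx').mpr (Or.inr (by omega))
    exact h.false_of_horizontal (by omega) hrow' (h.col_eq_of_row_eq hq hrow' hx) hD
  · have hq : 2 * L.succ s.1 < L.size := by unfold size; omega
    have hrow' : L.row (2 * L.succ s.1) = t.2.1 :=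
      hrow ▸ (row_eq_row_iff hq hy').mpr (Or.inr (by omega))
    exact h.false_of_horizontal (by omega) hrow' (h.col_eq_of_row_eq hq hrow' hy) hD

theorem false_of_succ_ne (h : L.Confuses a s t) (hs : s.1 < a) (ht : t.1 < a)
    (ha : a ≤ L.v + L.h) (hsucc : L.succ s.1 ≠ s.1) : False := by
  have hsn : s.1 < L.v + L.h := by omega
  have := succ_lt hsn
  by_cases hbig : s.1 = 0 ∧ a < L.v + L.h
  · -- label `0` then also sits on piece `a`
    have : L.succ s.1 ≤ 1 := by rw [hbig.1]; unfold succ; split_ifs <;> omega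
    have := h.1
    have : L.label a (2 * a) = s.1 := by
      rw [label_two_mul hbig.2, clamp, if_neg (lt_irrefl a), hbig.1]
    exact h.false_of_three (p := 2 * s.1) (q := 2 * a) (r := 2 * L.succ s.1 + 1)
      (by unfold size; omega) (by unfold size; omega) (by unfold size; omega)
      (by omega) (by omega) (by omega) (label_two_mul_self hs hsn) this
      (label_two_mul_succ_add_one hs hsn)
  have := pred_lt hsn
  have := (pred_eq_self_iff hsn).not.mpr hsucc
  have hx : L.label a (2 * s.1 + 1) ≠ s.1 := by
    rw [label_two_mul_add_one, clamp]; split_ifs <;> omega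
  have hy : L.label a (2 * L.succ s.1) ≠ s.1 := by
    rw [label_two_mul (succ_lt hsn), clamp]; split_ifs <;> omega
  by_cases hsv : s.1 < L.v
  · exact h.false_of_lt_v hs ht ha hsv hsucc hx hy
  · exact h.false_of_v_le hs ht ha (by omega) hsucc hx hy

/-- With one vertical and one horizontal domino, the labels `0` and `1` each fill a whole
domino; this is the configuration that fails for `(2, 4, 4)`. -/
theorem false_of_succ_eq (h : L.Confuses a s t) (hL : L.Fits a b c)
    (hexc : ¬(a = 2 ∧ b = 4 ∧ c = 4)) (ht : t.1 < a) (htb : t.2.1 < b)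
    (hv : L.v = 1) (hh : L.h = 1) (hs0 : s.1 = 0) (ht1 : t.1 = 1) : False := by
  have := hL.a_le; have := hL.le_rows; have := hL.cols_eq; have := L.e_le_one; have := h.2.1
  have hsize : 4 ≤ L.size := by unfold size; omega
  have hlab : ∀ i < 2, L.label a (2 * i) = i ∧ L.label a (2 * i + 1) = i := by
    intro i hi
    rw [label_two_mul (by omega), label_two_mul_add_one, clamp, clamp, pred]
    split_ifs <;> omega
  have h0 := h.row_or_col (p := 2 * 0) (by omega) ((hlab 0 (by omega)).1.trans hs0.symm)
  have h1 := h.row_or_col (p := 2 * 0 + 1) (by omega) ((hlab 0 (by omega)).2.trans hs0.symm)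
  have h2 := h.symm.row_or_col (p := 2 * 1) (by omega) ((hlab 1 (by omega)).1.trans ht1.symm)
  have h3 := h.symm.row_or_col (p := 2 * 1 + 1) (by omega) ((hlab 1 (by omega)).2.trans ht1.symm)
  simp only [row, col, hv] at h0 h1 h2 h3
  norm_num at h0 h1 h2 h3
  rcases Nat.eq_zero_or_eq_succ_pred L.e with he | he
  · exact hexc ⟨by omega, by omega, by omega⟩
  · have h4 := h.symm.row_or_col (p := 2 * (L.v + L.h)) (by unfold size; omega)
      (label_singleton.trans (by omega))
    simp only [row, col, hv, hh] at h4
    norm_num at h4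
    omega

theorem false (h : L.Confuses a s t) (hL : L.Fits a b c) (hexc : ¬(a = 2 ∧ b = 4 ∧ c = 4))
    (hs : s.1 < a) (ht : t.1 < a) (hsb : s.2.1 < b) (htb : t.2.1 < b) : False := by
  have ha := hL.a_le
  by_cases hps : L.succ s.1 = s.1
  · by_cases hpt : L.succ t.1 = t.1
    · rcases (succ_eq_self_iff (by omega)).mp hps with ⟨hv, hs0⟩ | ⟨hh, hsv⟩ <;>
        rcases (succ_eq_self_iff (by omega)).mp hpt with ⟨hv', ht0⟩ | ⟨hh', htv⟩
      · exact h.1 (hs0.trans ht0.symm)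
      · exact h.false_of_succ_eq hL hexc ht htb hv hh' hs0 (by omega)
      · exact h.symm.false_of_succ_eq hL hexc hs hsb hv' hh ht0 (by omega)
      · exact h.1 (hsv.trans htv.symm)
    · exact h.symm.false_of_succ_ne ht hs ha hpt
  · exact h.false_of_succ_ne hs ht ha hps

end Confuses

theorem label_lt (ha : 0 < a) (p : ℕ) : L.label a p < a := by
  unfold label clamp; split_ifs <;> omega

def question (hL : L.Fits a b c) (p : Fin L.size) : Question a b c :=
  (⟨L.label a p, label_lt hL.a_pos p⟩, ⟨L.row p, (row_lt p.2).trans_le hL.rows_le⟩,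
    ⟨L.col p, by have := col_lt p.2; have := hL.cols_eq; omega⟩)

def strategy (hL : L.Fits a b c) : Finset (Question a b c) := univ.image (question hL)

theorem card_strategy (hL : L.Fits a b c) : (strategy hL).card = L.size := by
  rw [strategy, card_image_of_injective, card_univ, Fintype.card_fin]
  intro p q hpq
  simp only [question, Prod.ext_iff, Fin.ext_iff] at hpq
  exact Fin.ext (eq_of_row_eq_of_col_eq p.2 q.2 hpq.2.1 hpq.2.2)

theorem g_question (hL : L.Fits a b c) (s : Question a b c) (p : Fin L.size) :
    g s (question hL p) = L.agree a (s.1, s.2.1, s.2.2) p := by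
  simp only [g, agree, question, Fin.ext_iff]

theorem mem_image_snd_strategy {hL : L.Fits a b c} {x : Fin b × Fin c} :
    x ∈ (strategy hL).image Prod.snd ↔ ∃ p : Fin L.size, (question hL p).2 = x := by
  simp [strategy]

theorem mem_rows_strategy {hL : L.Fits a b c} {r : Fin b} :
    r ∈ ((strategy hL).image Prod.snd).image Prod.fst ↔ ∃ p < L.size, L.row p = r := by
  constructor
  · intro hr
    obtain ⟨x, hx, rfl⟩ := mem_image.mp hr
    obtain ⟨p, rfl⟩ := mem_image_snd_strategy.mp hx
    exact ⟨p, p.2, rfl⟩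
  · rintro ⟨p, hp, hr⟩
    exact mem_image.mpr ⟨_, mem_image_snd_strategy.mpr ⟨⟨p, hp⟩, rfl⟩, Fin.ext hr⟩

theorem mem_cols_strategy {hL : L.Fits a b c} {w : Fin c} :
    w ∈ ((strategy hL).image Prod.snd).image Prod.snd ↔ ∃ p < L.size, L.col p = w := by
  constructor
  · intro hw
    obtain ⟨x, hx, rfl⟩ := mem_image.mp hw
    obtain ⟨p, rfl⟩ := mem_image_snd_strategy.mp hx
    exact ⟨p, p.2, rfl⟩
  · rintro ⟨p, hp, hw⟩
    exact mem_image.mpr ⟨_, mem_image_snd_strategy.mpr ⟨⟨p, hp⟩, rfl⟩, Fin.ext hw⟩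

/-- Every domino cell shares a line with its partner. -/
theorem eq_singleton_of_isLonely {hL : L.Fits a b c} {p : Fin L.size}
    (hp : IsLonely ((strategy hL).image Prod.snd) (question hL p).2) :
    (p : ℕ) = 2 * (L.v + L.h) := by
  by_contra hne
  have := le_of_lt_size p.2
  set q : Fin L.size := ⟨if (p : ℕ) % 2 = 0 then p + 1 else p - 1, by
    have := p.2; unfold size at *; split_ifs <;> omega⟩
  have hq : (q : ℕ) / 2 = p / 2 ∧ (q : ℕ) ≠ p := by simp only [q]; split_ifs <;> omega
  have hmem : (question hL q).2 ∈ (strategy hL).image Prod.snd :=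
    mem_image_snd_strategy.mpr ⟨q, rfl⟩
  have hqp : (question hL q).2 = (question hL p).2 := by
    by_cases hv : (p : ℕ) / 2 < L.v
    · exact hp.2 _ hmem (Fin.ext (col_eq_col_iff.mpr (Or.inr ⟨hq.1, by omega⟩)))
    · exact hp.1 _ hmem (Fin.ext ((row_eq_row_iff q.2 p.2).mpr (Or.inr ⟨hq.1, by omega, by omega⟩)))
  simp only [question, Prod.ext_iff, Fin.ext_iff] at hqp
  exact hq.2 (eq_of_row_eq_of_col_eq q.2 p.2 hqp.1 hqp.2)

theorem separates_strategy (hL : L.Fits a b c) : Separates ((strategy hL).image Prod.snd) := by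
  have := hL.a_pos; have := hL.a_le; have := hL.rows_le; have := hL.le_rows; have := hL.cols_eq
  have : NeZero b := ⟨by omega⟩
  have : NeZero c := ⟨by omega⟩
  have hrow (r : Fin b) (hr : r ∉ ((strategy hL).image Prod.snd).image Prod.fst) :
      2 * L.v + L.h + L.e ≤ r := by
    by_contra! h
    exact hr (mem_rows_strategy.mpr (exists_row_eq h))
  have hcol (w : Fin c) (hw : w ∉ ((strategy hL).image Prod.snd).image Prod.snd) :
      L.v + 2 * L.h + L.e ≤ w := by
    by_contra! h
    exact hw (mem_cols_strategy.mpr (exists_col_eq h))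
  refine separates_of_forall (fun r r' hr hr' => ?_) (fun w w' hw hw' => ?_) ?_ ?_
  · have := hrow r hr; have := hrow r' hr'; omega
  · have := hcol w hw; have := hcol w' hw'; omega
  · intro x hx y hy hlx hly
    obtain ⟨p, rfl⟩ := mem_image_snd_strategy.mp hx
    obtain ⟨q, rfl⟩ := mem_image_snd_strategy.mp hy
    have := eq_singleton_of_isLonely hlx
    have := eq_singleton_of_isLonely hly
    rw [show p = q from Fin.ext (by omega)]
  · intro r w hr _ x hx hlx
    obtain ⟨p, rfl⟩ := mem_image_snd_strategy.mp hx
    have := eq_singleton_of_isLonely hlx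
    have := hrow r hr
    have : (p : ℕ) < L.size := p.2
    unfold size at this
    omega

theorem feasible_strategy (hL : L.Fits a b c) (hexc : ¬(a = 2 ∧ b = 4 ∧ c = 4)) :
    Feasible (strategy hL) := by
  have := hL.a_le
  have mem (p : ℕ) (hp : p < L.size) : question hL ⟨p, hp⟩ ∈ strategy hL :=
    mem_image_of_mem _ (mem_univ _)
  refine feasible_of_separates (separates_strategy hL) (fun u => ?_) (fun u u' hu hu' => ?_)
    (fun u u' hu hu' => ?_) (fun s s' hu hv hw => ?_)
  · have hp : 2 * (u : ℕ) < L.size := by unfold size; omega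
    exact ⟨_, mem _ hp, Fin.ext (label_two_mul_self u.2 (by omega))⟩
  · obtain ⟨r, hr⟩ := hu
    obtain ⟨r', hr'⟩ := hu'
    have := eq_of_row_confined u.2 (by omega) fun p hp hl =>
      congrArg Fin.val (hr _ (mem p hp) (Fin.ext hl))
    have := eq_of_row_confined u'.2 (by omega) fun p hp hl =>
      congrArg Fin.val (hr' _ (mem p hp) (Fin.ext hl))
    exact Fin.ext (by omega)
  · obtain ⟨w, hw⟩ := hu
    obtain ⟨w', hw'⟩ := hu'
    have := eq_of_col_confined u.2 (by omega) fun p hp hl =>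
      congrArg Fin.val (hw _ (mem p hp) (Fin.ext hl))
    have := eq_of_col_confined u'.2 (by omega) fun p hp hl =>
      congrArg Fin.val (hw' _ (mem p hp) (Fin.ext hl))
    exact Fin.ext (by omega)
  · by_contra! hall
    have hconf : L.Confuses a (s.1, s.2.1, s.2.2) (s'.1, s'.2.1, s'.2.2) :=
      ⟨Fin.val_ne_of_ne hu, Fin.val_ne_of_ne hv, Fin.val_ne_of_ne hw, fun p hp => by
        rw [← g_question hL s ⟨p, hp⟩, ← g_question hL s' ⟨p, hp⟩]
        exact hall _ (mem p hp)⟩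
    exact hconf.false hL hexc s.1.2 s'.1.2 s.2.1.2 s'.2.1.2

theorem exists_fits (ha : 0 < a) (hbc : b ≤ c) (hcb : c < 2 * b)
    (h3a : 3 * a < b + c) : ∃ L : Layout, L.Fits a b c ∧ L.size = 2 * (b + c - 1) / 3 := by
  obtain ⟨v, h, e, he, hfits⟩ : ∃ v h e : ℕ, ∃ _ : e ≤ 1, a ≤ v + h ∧ 2 * v + h + e ≤ b ∧
      b ≤ 2 * v + h + 1 ∧ v + 2 * h + e + 1 = c ∧ 2 * (v + h) + e = 2 * (b + c - 1) / 3 := by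
    rcases (by omega : (b + c) % 3 = 0 ∨ (b + c) % 3 = 1 ∨ (b + c) % 3 = 2) with h | h | h
    · exact ⟨(2 * b - c) / 3, (2 * c - b - 3) / 3, 1, le_rfl, by omega⟩
    · exact ⟨(2 * b - c + 1) / 3, (2 * c - b - 2) / 3, 0, zero_le_one, by omega⟩
    · exact ⟨(2 * b - c - 1) / 3, (2 * c - b - 1) / 3, 0, zero_le_one, by omega⟩
  obtain ⟨h1, h2, h3, h4, h5⟩ := hfits
  exact ⟨⟨v, h, e, he⟩, ⟨ha, h1, h2, h3, h4⟩, h5⟩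

end Layout

/-- The only case in which the layout fails; here the first coordinate `0` is asked only once. -/
def strategy244 : Finset (Question 2 4 4) := {(0, 0, 0), (1, 1, 0), (1, 2, 1), (1, 2, 2)}

theorem feasible_strategy244 : Feasible strategy244 := by
  unfold Feasible; decide

theorem f_3a_lt_and_2b_gt_c_general (a b c : ℕ) (ha : 0 < a) (hbc : b ≤ c)
    (h3a : 3 * a < b + c) (h2b : c < 2 * b) :
    f a b c = 2 * (b + c - 1) / 3 := by
  have hmin (Q : Finset (Question a b c)) (hQ : Feasible Q) : 2 * (b + c - 1) / 3 ≤ Q.card :=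
    le_card_of_feasible hQ ha (by omega) (by omega)
  by_cases hexc : a = 2 ∧ b = 4 ∧ c = 4
  · obtain ⟨rfl, rfl, rfl⟩ := hexc
    exact f_eq_of_feasible feasible_strategy244 (by decide) hmin
  · obtain ⟨L, hL, hsize⟩ := Layout.exists_fits ha hbc h2b h3a
    exact f_eq_of_feasible (Layout.feasible_strategy hL hexc)
      ((Layout.card_strategy hL).trans hsize) hmin

theorem f_3a_lt_and_2b_gt_c (a b c : ℕ) (ha : 0 < a) (hab : a ≤ b) (hbc : b ≤ c)
    (h3a : 3 * a < b + c) (h2b : c < 2 * b) :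
    f a b c = 2 * (b + c - 1) / 3 :=
  f_3a_lt_and_2b_gt_c_general a b c ha hbc h3a h2b
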